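/- Let h > 0, t ≥ 1 and let w(x) = (1 + e^{-x})⁻¹ and α(x) = ln(1 + e^x). For any positive integer N satisfying N ≥ h⁻¹(ln 2 + |ln δ|) with δ ∈ (0,1), the tail sum ∑_{k > N} h · w(kh) · e^{-α(kh) t} is at most t⁻¹ e^{-N h} ≤ (1/2) t⁻¹ δ. -/
import Mathlib


open Real

theorem upper_tail_expsum_bound (h t δ : ℝ) (N : ℕ) (hh : 0 < h) (ht : 1 ≤ t)
    (hδ0 : 0 < δ) (hδ1 : δ < 1) (hN0 : 0 < N)
    (hN : (N : ℝ) ≥ h⁻¹ * (Real.log 2 + |Real.log δ|)) :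
    (∑' k : {k : ℕ // N < k},
        h * (1 + Real.exp (-((k : ℕ) * h)))⁻¹ * Real.exp (-(Real.log (1 + Real.exp ((k : ℕ) * h)) * t)))
      ≤ t⁻¹ * Real.exp (-(N * h)) ∧
    t⁻¹ * Real.exp (-(N * h)) ≤ (1 / 2) * t⁻¹ * δ := by
  have ht0 : (0:ℝ) < t := lt_of_lt_of_le one_pos ht
  set r := Real.exp (-(h*t)) with hrdef
  have hr0 : 0 < r := Real.exp_pos _
  have hr1 : r < 1 := by
    rw [hrdef, Real.exp_lt_one_iff]
    nlinarith
  have h1r : 0 < 1 - r := by linarith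
  -- termwise bound
  have hfg : ∀ k : ℕ,
      h * (1 + Real.exp (-((k:ℝ) * h)))⁻¹ * Real.exp (-(Real.log (1 + Real.exp ((k:ℝ) * h)) * t))
        ≤ h * r ^ k := by
    intro k
    have hkh : (0:ℝ) ≤ (k:ℝ) * h := by positivity
    have h1 : (1 + Real.exp (-((k:ℝ)*h)))⁻¹ ≤ 1 := by
      rw [inv_le_one_iff₀]
      right
      linarith [Real.exp_pos (-((k:ℝ)*h))]
    have h2 : Real.exp (-(Real.log (1 + Real.exp ((k:ℝ)*h)) * t)) ≤ r ^ k := by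
      rw [hrdef, ← Real.exp_nat_mul, Real.exp_le_exp]
      have hlog : (k:ℝ)*h ≤ Real.log (1 + Real.exp ((k:ℝ)*h)) := by
        calc (k:ℝ)*h = Real.log (Real.exp ((k:ℝ)*h)) := (Real.log_exp _).symm
          _ ≤ _ := Real.log_le_log (Real.exp_pos _) (by linarith [Real.exp_pos ((k:ℝ)*h)])
      nlinarith
    calc h * (1 + Real.exp (-((k:ℝ)*h)))⁻¹ * Real.exp (-(Real.log (1 + Real.exp ((k:ℝ)*h)) * t))
        ≤ h * 1 * (r ^ k) := by
          apply mul_le_mul (mul_le_mul le_rfl h1 (by positivity) hh.le) h2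
            (Real.exp_pos _).le (by positivity)
      _ = h * r ^ k := by ring
  have hfnonneg : ∀ k : ℕ,
      0 ≤ h * (1 + Real.exp (-((k:ℝ) * h)))⁻¹ * Real.exp (-(Real.log (1 + Real.exp ((k:ℝ) * h)) * t)) := by
    intro k
    have : (0:ℝ) < 1 + Real.exp (-((k:ℝ)*h)) := by positivity
    positivity
  have hsumg : Summable (fun k : ℕ => h * r ^ k) :=
    (summable_geometric_of_lt_one hr0.le hr1).mul_left h
  have hsumgS : Summable (fun k : {k : ℕ // N < k} => h * r ^ (k:ℕ)) :=
    hsumg.subtype _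
  have hsumfS : Summable (fun k : {k : ℕ // N < k} =>
      h * (1 + Real.exp (-((k:ℕ) * h)))⁻¹ * Real.exp (-(Real.log (1 + Real.exp ((k:ℕ) * h)) * t))) :=
    Summable.of_nonneg_of_le (fun k => hfnonneg k) (fun k => hfg k) hsumgS
  constructor
  · -- main tail bound
    have step1 : (∑' k : {k : ℕ // N < k},
        h * (1 + Real.exp (-((k:ℕ) * h)))⁻¹ * Real.exp (-(Real.log (1 + Real.exp ((k:ℕ) * h)) * t)))
        ≤ ∑' k : {k : ℕ // N < k}, h * r ^ (k:ℕ) :=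
      Summable.tsum_le_tsum (fun k => hfg k) hsumfS hsumgS
    -- compute geometric tail
    let e : ℕ ≃ {k : ℕ // N < k} :=
      { toFun := fun n => ⟨n + N + 1, by omega⟩
        invFun := fun k => k.1 - (N + 1)
        left_inv := fun n => by simp
        right_inv := fun k => by
          obtain ⟨k, hk⟩ := k
          simp only [Subtype.mk.injEq]
          omega }
    have step2 : (∑' k : {k : ℕ // N < k}, h * r ^ (k:ℕ))
        = h * r ^ (N + 1) * (1 - r)⁻¹ := by
      rw [← e.tsum_eq (fun k : {k : ℕ // N < k} => h * r ^ (k:ℕ))]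
      have : ∀ n : ℕ, h * r ^ ((e n : ℕ)) = (h * r ^ (N + 1)) * r ^ n := by
        intro n
        show h * r ^ (n + N + 1) = h * r ^ (N + 1) * r ^ n
        ring
      rw [tsum_congr this, tsum_mul_left, tsum_geometric_of_lt_one hr0.le hr1]
    have hA : h * r ≤ t⁻¹ * (1 - r) := by
      have hE : r * Real.exp (h*t) = 1 := by
        rw [hrdef, ← Real.exp_add]; simp
      have hexp : h*t + 1 ≤ Real.exp (h*t) := Real.add_one_le_exp _
      rw [inv_mul_eq_div, le_div_iff₀ ht0]
      nlinarith
    have hB : r ^ N ≤ Real.exp (-((N:ℝ) * h)) := by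
      rw [hrdef, ← Real.exp_nat_mul, Real.exp_le_exp]
      have : (0:ℝ) ≤ (N:ℝ) * h := by positivity
      nlinarith
    have step3 : h * r ^ (N + 1) * (1 - r)⁻¹ ≤ t⁻¹ * Real.exp (-((N:ℝ) * h)) := by
      rw [mul_inv_le_iff₀ h1r, pow_succ]
      have hEp : (0:ℝ) ≤ Real.exp (-((N:ℝ) * h)) := (Real.exp_pos _).le
      have h1 : (h * r) * r ^ N ≤ (t⁻¹ * (1 - r)) * Real.exp (-((N:ℝ) * h)) := by
        apply mul_le_mul hA hB (by positivity) (by positivity)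
      nlinarith
    calc _ ≤ ∑' k : {k : ℕ // N < k}, h * r ^ (k:ℕ) := step1
      _ = h * r ^ (N + 1) * (1 - r)⁻¹ := step2
      _ ≤ _ := step3
  · -- second inequality
    have habs : |Real.log δ| = -Real.log δ :=
      abs_of_nonpos (Real.log_nonpos hδ0.le hδ1.le)
    have hNh : Real.log 2 - Real.log δ ≤ (N:ℝ) * h := by
      rw [habs] at hN
      have hkey : h⁻¹ * (Real.log 2 + -Real.log δ) * h = Real.log 2 - Real.log δ := by
        field_simp
        ring
      linarith [mul_le_mul_of_nonneg_right hN hh.le]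
    have hexp : Real.exp (-((N:ℝ) * h)) ≤ δ / 2 := by
      calc Real.exp (-((N:ℝ) * h)) ≤ Real.exp (Real.log δ - Real.log 2) := by
            rw [Real.exp_le_exp]; linarith
        _ = δ / 2 := by
            rw [Real.exp_sub, Real.exp_log hδ0, Real.exp_log two_pos]
    calc t⁻¹ * Real.exp (-((N:ℝ) * h)) ≤ t⁻¹ * (δ / 2) := by
          apply mul_le_mul_of_nonneg_left hexp (by positivity)
      _ = (1/2) * t⁻¹ * δ := by ring
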